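/- Let X be a nontrivial real Banach space and δ > 0. Then X is weakly δ-average rough if and only if the following holds: whenever n ∈ ℕ, x₁,…,xₙ are in the unit sphere S_X, x* is in the closed unit ball B_{X*} of the dual, and ε > 0 and t₀ > 0, there is y ∈ S_X such that inf over i ∈ {1,…,n} and t ≥ t₀ of (‖xᵢ+ty‖ − x*(xᵢ))/t, minus sup over i ∈ {1,…,n} and t ≥ t₀ of (‖xᵢ−ty‖ − x*(xᵢ))/(−t), is greater than δ − ε. -/

import Mathlib

open scoped BigOperators

/-- A Banach space `Z` is `δ`-average rough. -/
def IsAverageRough (Z : Type*) [NormedAddCommGroup Z] (δ : ℝ) : Prop :=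
  ∀ n : ℕ, 0 < n → ∀ x : Fin n → Z, (∀ i, ‖x i‖ = 1) →
    ∀ ε > (0 : ℝ), ∀ η > (0 : ℝ), ∃ y : Z, 0 < ‖y‖ ∧ ‖y‖ < η ∧
      (δ - ε) * ‖y‖ ≤ (1 / (n : ℝ)) * ∑ i, (‖x i + y‖ + ‖x i - y‖) - 2

/-- A Banach space `Z` is `δ`-rough. -/
def IsRough (Z : Type*) [NormedAddCommGroup Z] (δ : ℝ) : Prop :=
  ∀ x : Z, ‖x‖ = 1 →
    ∀ ε > (0 : ℝ), ∀ η > (0 : ℝ), ∃ y : Z, 0 < ‖y‖ ∧ ‖y‖ < η ∧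
      (δ - ε) * ‖y‖ ≤ ‖x + y‖ + ‖x - y‖ - 2

/-- A Banach space `Z` is non-rough if it is `ε`-rough for no `ε > 0`. -/
def NonRough (Z : Type*) [NormedAddCommGroup Z] : Prop :=
  ¬ ∃ ε > (0 : ℝ), IsRough Z ε

/-- A Banach space `Z` is octahedral. -/
def Octahedral (Z : Type*) [NormedAddCommGroup Z] : Prop :=
  ∀ (n : ℕ) (x : Fin n → Z), (∀ i, ‖x i‖ = 1) →
    ∀ ε > (0 : ℝ), ∃ y : Z, ‖y‖ = 1 ∧ ∀ i, 2 - ε ≤ ‖x i + y‖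

/-- A Banach space `Z` is alternatively octahedral. -/
def AlternativelyOctahedral (Z : Type*) [NormedAddCommGroup Z] : Prop :=
  ∀ (n : ℕ) (x : Fin n → Z), (∀ i, ‖x i‖ = 1) →
    ∀ ε > (0 : ℝ), ∃ y : Z, ‖y‖ = 1 ∧ ∀ i, 2 - ε ≤ max ‖x i + y‖ ‖x i - y‖

/-- A Banach space `X` is weakly `δ`-average rough: every non-empty relatively weak*
open subset of the closed unit ball of the dual has diameter at least `δ`. -/
def WeaklyAverageRough (X : Type*) [NormedAddCommGroup X] [NormedSpace ℝ X] (δ : ℝ) : Prop :=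
  ∀ V : Set (WeakDual ℝ X), IsOpen V →
    ∀ U : Set (StrongDual ℝ X),
      U = {f : StrongDual ℝ X | ‖f‖ ≤ 1} ∩
            {f : StrongDual ℝ X | StrongDual.toWeakDual f ∈ V} →
      U.Nonempty → δ ≤ Metric.diam U

/-!
Forward direction: if `g, g'` lie in the weak* neighbourhood `{g ∈ B_{X*} | g xᵢ > f xᵢ - γ}` of
`f` and are almost `δ` apart, take a unit `y` almost norming `g - g'`. Since `‖·‖ ≥ g` and
`‖·‖ ≥ g'`, every right slope at `y` is at least `g y - γ / t₀` and every left slope at most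
`g' y + γ / t₀`.

Backward direction: every relatively weak* open subset of `B_{X*}` containing `f` contains a slice
`{g ∈ B_{X*} | ∀ j, f vⱼ - a ≤ g vⱼ}` for finitely many `vⱼ` in the unit ball. By Hahn–Banach the
sublinear functional `p z = inf_{λ ≥ 0} ‖z + ∑ λⱼ vⱼ‖ - ∑ λⱼ (f vⱼ - a)` is attained at `y` and
at `-y` by functionals `g, g'` of the slice, so `‖g - g'‖ ≥ p y + p (-y)`. The normalised directions
of the cone spanned by the `vⱼ` form a compact set, so finitely many unit vectors `Gᵢ` approximate
them, and comparing `p y` with the slopes at `Gᵢ` gives `p y ≥ inf (right slopes) - η` and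
`p (-y) ≥ -sup (left slopes) - η`. The hypothesis applied to the `Gᵢ` ends the proof.
-/

open Metric Set
open scoped NNReal Pointwise

theorem exists_linearMap_le_sublinear_apply_eq {E : Type*} [AddCommGroup E] [Module ℝ E]
    (N : E → ℝ) (N_hom : ∀ c : ℝ, 0 < c → ∀ x, N (c • x) = c * N x)
    (N_add : ∀ x y, N (x + y) ≤ N x + N y) (y : E) :
    ∃ g : E →ₗ[ℝ] ℝ, (∀ x, g x ≤ N x) ∧ g y = N y := by
  have N_zero : N 0 = 0 := by simpa [two_mul] using N_hom 2 two_pos (0 : E)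
  have N_neg : -N y ≤ N (-y) := by linarith [add_neg_cancel y ▸ N_add y (-y)]
  have H : ∀ c : ℝ, c • y = 0 → c • N y = 0 := fun c hc => by
    rcases smul_eq_zero.1 hc with rfl | rfl <;> simp [N_zero]
  let F := LinearPMap.mkSpanSingleton' (σ := RingHom.id ℝ) y (N y) H
  have hF : ∀ x : F.domain, F x ≤ N x := by
    rintro ⟨x, hx⟩
    obtain ⟨c, rfl⟩ := Submodule.mem_span_singleton.1 hx
    change F ⟨c • y, hx⟩ ≤ N (c • y)
    rw [LinearPMap.mkSpanSingleton'_apply, RingHom.id_apply, smul_eq_mul]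
    rcases lt_trichotomy c 0 with hc | rfl | hc
    · rw [show c • y = (-c) • -y by simp, N_hom (-c) (neg_pos.2 hc)]
      nlinarith
    · simp [N_zero]
    · rw [N_hom c hc]
  obtain ⟨g, hgF, hgN⟩ := exists_extension_of_le_sublinear F N N_hom N_add hF
  refine ⟨g, hgN, ?_⟩
  have hy : y ∈ F.domain := Submodule.mem_span_singleton_self y
  rw [hgF ⟨y, hy⟩]
  exact LinearPMap.mkSpanSingleton'_apply_self _ _ H hy

theorem Metric.exists_lt_dist_of_lt_diam {α : Type*} [PseudoMetricSpace α] {s : Set α}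
    (hs : s.Nonempty) {r : ℝ} (hr : r < diam s) : ∃ p ∈ s, ∃ q ∈ s, r < dist p q := by
  by_contra! h
  obtain ⟨p, hp⟩ := hs
  exact hr.not_ge (diam_le_of_forall_dist_le (dist_nonneg.trans (h p hp p hp)) h)

section

variable {X : Type*} [NormedAddCommGroup X] [NormedSpace ℝ X]

theorem ContinuousLinearMap.apply_le_norm_of_norm_le_one {f : StrongDual ℝ X} (hf : ‖f‖ ≤ 1)
    (z : X) : f z ≤ ‖z‖ :=
  (le_abs_self _).trans (by simpa using f.le_of_opNorm_le hf z)

theorem ContinuousLinearMap.exists_norm_eq_one_lt_apply [Nontrivial X] (φ : StrongDual ℝ X)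
    {c : ℝ} (hc : c < ‖φ‖) : ∃ y : X, ‖y‖ = 1 ∧ c < φ y := by
  rw [← φ.sSup_sphere_eq_norm] at hc
  obtain ⟨_, ⟨x, hx, rfl⟩, hcx⟩ :=
    exists_lt_of_lt_csSup ((NormedSpace.sphere_nonempty.2 zero_le_one).image _) hc
  rw [mem_sphere_zero_iff_norm] at hx
  dsimp only at hcx
  rcases le_total 0 (φ x) with h | h
  · exact ⟨x, hx, by rwa [Real.norm_of_nonneg h] at hcx⟩
  · exact ⟨-x, by rwa [norm_neg], by rwa [map_neg, ← Real.norm_of_nonpos h]⟩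

section Slopes

variable {ι : Type*}

def rightSlopes (x : ι → X) (f : StrongDual ℝ X) (t₀ : ℝ) (y : X) : Set ℝ :=
  {r | ∃ i, ∃ t : ℝ, t₀ ≤ t ∧ r = (‖x i + t • y‖ - f (x i)) / t}

def leftSlopes (x : ι → X) (f : StrongDual ℝ X) (t₀ : ℝ) (y : X) : Set ℝ :=
  {r | ∃ i, ∃ t : ℝ, t₀ ≤ t ∧ r = (‖x i - t • y‖ - f (x i)) / (-t)}

variable {x : ι → X} {f g : StrongDual ℝ X} {t₀ γ : ℝ} {y : X}

theorem apply_sub_div_le_of_mem_rightSlopes (hg : ‖g‖ ≤ 1) (hgx : ∀ i, f (x i) - γ ≤ g (x i))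
    (hγ : 0 ≤ γ) (ht₀ : 0 < t₀) {r : ℝ} (hr : r ∈ rightSlopes x f t₀ y) : g y - γ / t₀ ≤ r := by
  obtain ⟨i, t, ht, rfl⟩ := hr
  have ht_pos : 0 < t := ht₀.trans_le ht
  calc g y - γ / t₀ ≤ g y - γ / t := by gcongr
    _ = (g (x i + t • y) - (g (x i) + γ)) / t := by
      rw [map_add, map_smul, smul_eq_mul]; field_simp; ring
    _ ≤ (‖x i + t • y‖ - f (x i)) / t := by
      gcongr
      · exact g.apply_le_norm_of_norm_le_one hg _
      · linarith [hgx i]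

theorem bddBelow_rightSlopes (hf : ‖f‖ ≤ 1) (ht₀ : 0 < t₀) : BddBelow (rightSlopes x f t₀ y) :=
  ⟨f y - 0 / t₀, fun _ => apply_sub_div_le_of_mem_rightSlopes hf (by simp) le_rfl ht₀⟩

theorem apply_sub_div_le_sInf_rightSlopes [Nonempty ι] (hg : ‖g‖ ≤ 1)
    (hgx : ∀ i, f (x i) - γ ≤ g (x i)) (hγ : 0 ≤ γ) (ht₀ : 0 < t₀) :
    g y - γ / t₀ ≤ sInf (rightSlopes x f t₀ y) :=
  le_csInf ⟨_, Classical.arbitrary ι, t₀, le_rfl, rfl⟩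
    fun _ => apply_sub_div_le_of_mem_rightSlopes hg hgx hγ ht₀

theorem leftSlopes_eq_neg_rightSlopes_neg :
    leftSlopes x f t₀ y = -rightSlopes x f t₀ (-y) := by
  ext r
  simp only [leftSlopes, rightSlopes, Set.mem_neg, Set.mem_ofPred_eq, smul_neg, ← sub_eq_add_neg,
    div_neg, neg_eq_iff_eq_neg]

theorem sSup_leftSlopes : sSup (leftSlopes x f t₀ y) = -sInf (rightSlopes x f t₀ (-y)) := by
  rw [leftSlopes_eq_neg_rightSlopes_neg, Real.sSup_neg]

theorem sSup_leftSlopes_le_apply_add_div [Nonempty ι] (hg : ‖g‖ ≤ 1)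
    (hgx : ∀ i, f (x i) - γ ≤ g (x i)) (hγ : 0 ≤ γ) (ht₀ : 0 < t₀) :
    sSup (leftSlopes x f t₀ y) ≤ g y + γ / t₀ := by
  have := apply_sub_div_le_sInf_rightSlopes (y := -y) hg hgx hγ ht₀
  rw [map_neg] at this
  rw [sSup_leftSlopes]
  linarith

theorem sInf_rightSlopes_le_one [Nonempty ι] (hx : ∀ i, ‖x i‖ ≤ 1) (hf : ‖f‖ ≤ 1) (ht₀ : 0 < t₀)
    (hy : ‖y‖ = 1) : sInf (rightSlopes x f t₀ y) ≤ 1 := by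
  refine le_of_forall_pos_le_add fun ε hε => ?_
  obtain ⟨i⟩ := ‹Nonempty ι›
  set t := max t₀ (2 / ε)
  have ht : 0 < t := ht₀.trans_le (le_max_left _ _)
  have hfx : -f (x i) ≤ 1 := by
    linarith [hx i, f.apply_le_norm_of_norm_le_one hf (-x i), map_neg f (x i), norm_neg (x i)]
  have hxy : ‖x i + t • y‖ ≤ 1 + t := by
    calc ‖x i + t • y‖ ≤ ‖x i‖ + ‖t • y‖ := norm_add_le _ _
      _ ≤ 1 + t := by rw [norm_smul, hy, Real.norm_of_nonneg ht.le, mul_one]; linarith [hx i]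
  calc sInf (rightSlopes x f t₀ y) ≤ (‖x i + t • y‖ - f (x i)) / t :=
        csInf_le (bddBelow_rightSlopes hf ht₀) ⟨i, t, le_max_left _ _, rfl⟩
    _ ≤ (t + 2) / t := by gcongr; linarith
    _ = 1 + 2 / t := by field_simp
    _ ≤ 1 + ε := by
      gcongr
      rw [div_le_iff₀ ht, ← div_le_iff₀' hε]
      exact le_max_right _ _

end Slopes

section HalfspaceSupport

variable {ι : Type*} [Fintype ι]

/-- By duality this is the support function `z ↦ max {g z | ‖g‖ ≤ 1 ∧ ∀ j, b j ≤ g (v j)}` of a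
slice of `B_{X*}`. -/
noncomputable def halfspaceSupport (v : ι → X) (b : ι → ℝ) (z : X) : ℝ :=
  ⨅ l : ι → ℝ≥0, ‖z + ∑ j, (l j : ℝ) • v j‖ - ∑ j, (l j : ℝ) * b j

variable {v : ι → X} {b : ι → ℝ} {f : StrongDual ℝ X}

theorem apply_le_norm_add_sum_sub_sum (hf : ‖f‖ ≤ 1) (hb : ∀ j, b j ≤ f (v j)) (z : X)
    (l : ι → ℝ≥0) : f z ≤ ‖z + ∑ j, (l j : ℝ) • v j‖ - ∑ j, (l j : ℝ) * b j := by
  calc f z ≤ f z + ∑ j, (l j : ℝ) * (f (v j) - b j) :=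
        le_add_of_nonneg_right <|
          Finset.sum_nonneg fun j _ => mul_nonneg (l j).2 (sub_nonneg.2 (hb j))
    _ = f (z + ∑ j, (l j : ℝ) • v j) - ∑ j, (l j : ℝ) * b j := by
      simp only [map_add, map_sum, map_smul, smul_eq_mul, mul_sub, Finset.sum_sub_distrib]; ring
    _ ≤ _ := by gcongr; exact f.apply_le_norm_of_norm_le_one hf _

theorem halfspaceSupport_le (hf : ‖f‖ ≤ 1) (hb : ∀ j, b j ≤ f (v j)) (z : X) (l : ι → ℝ≥0) :
    halfspaceSupport v b z ≤ ‖z + ∑ j, (l j : ℝ) • v j‖ - ∑ j, (l j : ℝ) * b j :=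
  ciInf_le ⟨f z, forall_mem_range.2 (apply_le_norm_add_sum_sub_sum hf hb z)⟩ l

theorem halfspaceSupport_le_norm (hf : ‖f‖ ≤ 1) (hb : ∀ j, b j ≤ f (v j)) (z : X) :
    halfspaceSupport v b z ≤ ‖z‖ := by
  simpa using halfspaceSupport_le hf hb z 0

theorem halfspaceSupport_neg_le (hf : ‖f‖ ≤ 1) (hb : ∀ j, b j ≤ f (v j)) (j : ι) :
    halfspaceSupport v b (-v j) ≤ -b j := by
  classical
  simpa [Pi.single_apply, apply_ite ((↑) : ℝ≥0 → ℝ), ite_smul, ite_mul] using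
    halfspaceSupport_le hf hb (-v j) (Pi.single j 1)

theorem halfspaceSupport_add_le (hf : ‖f‖ ≤ 1) (hb : ∀ j, b j ≤ f (v j)) (z w : X) :
    halfspaceSupport v b (z + w) ≤ halfspaceSupport v b z + halfspaceSupport v b w := by
  refine le_ciInf_add_ciInf fun l l' => (halfspaceSupport_le hf hb _ (l + l')).trans ?_
  have hsum : z + w + ∑ j, ((l + l') j : ℝ) • v j =
      (z + ∑ j, (l j : ℝ) • v j) + (w + ∑ j, (l' j : ℝ) • v j) := by
    simp only [Pi.add_apply, NNReal.coe_add, add_smul, Finset.sum_add_distrib]; abel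
  rw [hsum]
  simp only [Pi.add_apply, NNReal.coe_add, add_mul, Finset.sum_add_distrib]
  linarith [norm_add_le (z + ∑ j, (l j : ℝ) • v j) (w + ∑ j, (l' j : ℝ) • v j)]

theorem halfspaceSupport_smul_le (hf : ‖f‖ ≤ 1) (hb : ∀ j, b j ≤ f (v j)) {c : ℝ} (hc : 0 < c)
    (z : X) : halfspaceSupport v b (c • z) ≤ c * halfspaceSupport v b z := by
  rw [halfspaceSupport, halfspaceSupport, Real.mul_iInf_of_nonneg hc.le]
  refine le_ciInf fun l => (halfspaceSupport_le hf hb _ (c.toNNReal • l)).trans_eq ?_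
  simp only [Pi.smul_apply, smul_eq_mul, NNReal.coe_mul, Real.coe_toNNReal _ hc.le, mul_smul,
    ← Finset.smul_sum, ← smul_add, norm_smul, Real.norm_of_nonneg hc.le, mul_assoc,
    ← Finset.mul_sum, mul_sub]

theorem halfspaceSupport_smul (hf : ‖f‖ ≤ 1) (hb : ∀ j, b j ≤ f (v j)) {c : ℝ} (hc : 0 < c)
    (z : X) : halfspaceSupport v b (c • z) = c * halfspaceSupport v b z := by
  refine (halfspaceSupport_smul_le hf hb hc z).antisymm ?_
  have := halfspaceSupport_smul_le hf hb (inv_pos.2 hc) (c • z)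
  rwa [inv_smul_smul₀ hc.ne', le_inv_mul_iff₀ hc] at this

theorem exists_dual_forall_le_apply_eq_halfspaceSupport (hf : ‖f‖ ≤ 1)
    (hb : ∀ j, b j ≤ f (v j)) (y : X) :
    ∃ g : StrongDual ℝ X, ‖g‖ ≤ 1 ∧ (∀ j, b j ≤ g (v j)) ∧ g y = halfspaceSupport v b y := by
  obtain ⟨g, hgN, hgy⟩ := exists_linearMap_le_sublinear_apply_eq _
    (fun c hc => halfspaceSupport_smul hf hb hc) (halfspaceSupport_add_le hf hb) y
  have hg : ∀ z, g z ≤ ‖z‖ := fun z => (hgN z).trans (halfspaceSupport_le_norm hf hb z)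
  have hg_bound : ∀ z, ‖g z‖ ≤ 1 * ‖z‖ := fun z => by
    rw [one_mul, Real.norm_eq_abs, abs_le]
    exact ⟨by linarith [hg (-z), map_neg g z, norm_neg z], hg z⟩
  refine ⟨g.mkContinuous 1 hg_bound, g.mkContinuous_norm_le zero_le_one _, fun j => ?_, hgy⟩
  have := (hgN (-v j)).trans (halfspaceSupport_neg_le hf hb j)
  rw [map_neg] at this
  exact le_of_neg_le_neg this

end HalfspaceSupport

section Estimates

variable {κ : Type*} {G : κ → X} {f : StrongDual ℝ X} {a : ℝ} {y w : X}

theorem sInf_rightSlopes_le_of_dist_lt (hf : ‖f‖ ≤ 1) (ha : 0 < a) (hw : 0 < ‖w‖)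
    (haw : a * ‖w‖ ≤ 2) {γ : ℝ} {i : κ} (hi : dist (‖w‖⁻¹ • w) (G i) < γ) :
    sInf (rightSlopes G f (a / 2) y) ≤ ‖y + w‖ - f w + 2 * ‖w‖ * γ := by
  set c := ‖w‖
  have ht : a / 2 ≤ c⁻¹ := by
    rw [le_inv_comm₀ (half_pos ha) hw, inv_div, le_div_iff₀ ha]; linarith
  have hnorm : ‖G i + c⁻¹ • y‖ ≤ ‖c⁻¹ • w + c⁻¹ • y‖ + γ := by
    have := norm_le_norm_add_norm_sub' (G i + c⁻¹ • y) (c⁻¹ • w + c⁻¹ • y)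
    rw [dist_eq_norm] at hi
    rw [add_sub_add_right_eq_sub, norm_sub_rev] at this
    linarith
  have happly : f (c⁻¹ • w) - f (G i) ≤ γ := by
    rw [← map_sub]
    exact (f.apply_le_norm_of_norm_le_one hf _).trans (dist_eq_norm (c⁻¹ • w) (G i) ▸ hi.le)
  calc sInf (rightSlopes G f (a / 2) y) ≤ (‖G i + c⁻¹ • y‖ - f (G i)) / c⁻¹ :=
        csInf_le (bddBelow_rightSlopes hf (half_pos ha)) ⟨i, c⁻¹, ht, rfl⟩
    _ = c * (‖G i + c⁻¹ • y‖ - f (G i)) := by rw [div_inv_eq_mul, mul_comm]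
    _ ≤ c * (‖c⁻¹ • w + c⁻¹ • y‖ - f (c⁻¹ • w) + 2 * γ) := by gcongr; linarith
    _ = ‖y + w‖ - f w + 2 * c * γ := by
      rw [← smul_add, norm_smul, map_smul, smul_eq_mul, Real.norm_of_nonneg (inv_nonneg.2 hw.le),
        add_comm w y]
      field_simp

theorem sInf_rightSlopes_sub_le [Nonempty κ] (hf : ‖f‖ ≤ 1) (ha : 0 < a) {η : ℝ} (hη : 0 < η)
    (hG : ∀ i, ‖G i‖ ≤ 1) (hy : ‖y‖ = 1) {s : ℝ} (hws : ‖w‖ ≤ s)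
    (happrox : η / 2 ≤ ‖w‖ → a * s < 2 → ∃ i, dist (‖w‖⁻¹ • w) (G i) < η * a / 4) :
    sInf (rightSlopes G f (a / 2) y) - η ≤ ‖y + w‖ - f w + a * s := by
  have h_one := sInf_rightSlopes_le_one hG hf (half_pos ha) hy
  have hfw := f.apply_le_norm_of_norm_le_one hf w
  have has : 0 ≤ a * s := mul_nonneg ha.le ((norm_nonneg w).trans hws)
  -- If `a s < 2` and `w` is not small, then `t = ‖w‖⁻¹ ≥ a / 2` is an admissible slope parameter
  -- at the net point next to `‖w‖⁻¹ • w`.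
  by_cases h_large : 2 ≤ a * s
  · have hfy : -1 ≤ f y := by
      linarith [f.apply_le_norm_of_norm_le_one hf (-y), map_neg f y, norm_neg y]
    linarith [f.apply_le_norm_of_norm_le_one hf (y + w), map_add f y w]
  by_cases h_small : ‖w‖ < η / 2
  · have := norm_sub_norm_le y (-w)
    rw [sub_neg_eq_add, norm_neg, hy] at this
    linarith
  obtain ⟨i, hi⟩ := happrox (not_lt.1 h_small) (not_le.1 h_large)
  have hw : 0 < ‖w‖ := by linarith
  have haw : a * ‖w‖ ≤ 2 := by nlinarith
  have := sInf_rightSlopes_le_of_dist_lt hf ha hw haw (y := y) hi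
  nlinarith

theorem sInf_rightSlopes_sub_le_halfspaceSupport {ι : Type*} [Fintype ι] [Nonempty κ] {v : ι → X}
    (hv : ∀ j, ‖v j‖ ≤ 1) (hf : ‖f‖ ≤ 1) (ha : 0 < a) {η : ℝ} (hη : 0 < η)
    (hG : ∀ i, ‖G i‖ ≤ 1)
    (hnet : ∀ u ∈ convexHull ℝ (range v), η * a / 4 ≤ ‖u‖ →
      ∃ i, dist (‖u‖⁻¹ • u) (G i) < η * a / 4)
    (hy : ‖y‖ = 1) :
    sInf (rightSlopes G f (a / 2) y) - η ≤ halfspaceSupport v (fun j => f (v j) - a) y := by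
  refine le_ciInf fun l => ?_
  set w := ∑ j, (l j : ℝ) • v j
  set s := ∑ j, (l j : ℝ)
  have hws : ‖w‖ ≤ s := by
    refine (norm_sum_le _ _).trans (Finset.sum_le_sum fun j _ => ?_)
    rw [norm_smul, NNReal.norm_eq]
    exact mul_le_of_le_one_right (l j).2 (hv j)
  have hsum : ∑ j, (l j : ℝ) * (f (v j) - a) = f w - a * s := by
    simp only [w, s, map_sum, map_smul, smul_eq_mul, mul_sub, Finset.sum_sub_distrib,
      Finset.sum_mul, mul_comm a]
  rw [hsum, sub_sub_eq_add_sub, add_sub_right_comm]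
  refine sInf_rightSlopes_sub_le hf ha hη hG hy hws fun hw hs => ?_
  have hs_pos : 0 < s := by linarith
  have hu : s⁻¹ • w ∈ convexHull ℝ (range v) :=
    Finset.univ.centerMass_mem_convexHull (fun j _ => (l j).2) hs_pos
      fun j _ => mem_range_self j
  have hu_norm : ‖s⁻¹ • w‖ = ‖w‖ / s := by
    rw [norm_smul, Real.norm_of_nonneg (inv_nonneg.2 hs_pos.le), inv_mul_eq_div]
  obtain ⟨i, hi⟩ := hnet _ hu (by rw [hu_norm, le_div_iff₀ hs_pos]; nlinarith)
  refine ⟨i, ?_⟩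
  rwa [hu_norm, smul_smul, inv_div, div_mul_eq_mul_div, mul_inv_cancel₀ hs_pos.ne', one_div] at hi

end Estimates

theorem IsCompact.image_inv_norm_smul {S : Set X} (hS : IsCompact S) (h0 : (0 : X) ∉ S) :
    IsCompact ((fun u => ‖u‖⁻¹ • u) '' S) :=
  hS.image_of_continuousOn <| (continuousOn_id.norm.inv₀ fun _ hu => norm_ne_zero_iff.2
    (ne_of_mem_of_not_mem hu h0)).smul continuousOn_id

theorem exists_fin_unit_net [Nontrivial X] {K : Set X} (hK : IsCompact K)
    (hK_unit : ∀ u ∈ K, ‖u‖ = 1) {γ : ℝ} (hγ : 0 < γ) :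
    ∃ n, 0 < n ∧ ∃ G : Fin n → X, (∀ i, ‖G i‖ = 1) ∧ ∀ u ∈ K, ∃ i, dist u (G i) < γ := by
  obtain ⟨T, hTK, hT, hKT⟩ := finite_cover_balls_of_compact hK hγ
  obtain ⟨e, he⟩ := exists_norm_eq X zero_le_one
  obtain ⟨n, G, -, hG⟩ := (hT.insert e).fin_param
  obtain ⟨i₀, -⟩ : e ∈ range G := hG ▸ mem_insert e T
  refine ⟨n, i₀.pos, G, fun i => ?_, fun u hu => ?_⟩
  · rcases (hG ▸ mem_range_self i : G i ∈ insert e T) with h | h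
    · rwa [h]
    · exact hK_unit _ (hTK h)
  · obtain ⟨z, hzT, hz⟩ := mem_iUnion₂.1 (hKT hu)
    obtain ⟨i, rfl⟩ : z ∈ range G := hG ▸ mem_insert_of_mem e hzT
    exact ⟨i, hz⟩

theorem exists_fin_unit_net_convexHull [Nontrivial X] {ι : Type*} [Finite ι] (v : ι → X) {γ : ℝ}
    (hγ : 0 < γ) : ∃ n, 0 < n ∧ ∃ G : Fin n → X, (∀ i, ‖G i‖ = 1) ∧
      ∀ u ∈ convexHull ℝ (range v), γ ≤ ‖u‖ → ∃ i, dist (‖u‖⁻¹ • u) (G i) < γ := by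
  set S := convexHull ℝ (range v) ∩ {u | γ ≤ ‖u‖}
  have hS : IsCompact S := ((finite_range v).isCompact_convexHull ℝ).inter_right
    (isClosed_le continuous_const continuous_norm)
  have hS0 : (0 : X) ∉ S := fun h0 => hγ.not_ge (by simpa using h0.2)
  obtain ⟨n, hn, G, hG, hnet⟩ := exists_fin_unit_net (hS.image_inv_norm_smul hS0)
    (by rintro _ ⟨u, hu, rfl⟩; exact norm_smul_inv_norm (ne_of_mem_of_not_mem hu hS0)) hγ
  exact ⟨n, hn, G, hG, fun u hu hγu => hnet _ (mem_image_of_mem _ ⟨hu, hγu⟩)⟩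

section WeakStar

variable {f : StrongDual ℝ X} {V : Set (WeakDual ℝ X)}

theorem exists_finset_forall_abs_sub_lt_mem (hV : IsOpen V) (hfV : StrongDual.toWeakDual f ∈ V) :
    ∃ I : Finset X, ∃ r > 0, ∀ g : StrongDual ℝ X,
      (∀ x ∈ I, |g x - f x| < r) → StrongDual.toWeakDual g ∈ V := by
  obtain ⟨I, r, hr, hball⟩ := ((WeakDual.withSeminorms ℝ X).mem_nhds_iff _ V).1 (hV.mem_nhds hfV)
  refine ⟨I, r, hr, fun g hg => hball ?_⟩
  rw [Seminorm.mem_ball]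
  exact Seminorm.finset_sup_apply_lt hr fun x hx => hg x hx

theorem exists_finset_forall_sub_le_mem (hV : IsOpen V) (hfV : StrongDual.toWeakDual f ∈ V) :
    ∃ J : Finset X, (∀ u ∈ J, ‖u‖ ≤ 1) ∧ ∃ a > 0, ∀ g : StrongDual ℝ X,
      (∀ u ∈ J, f u - a ≤ g u) → StrongDual.toWeakDual g ∈ V := by
  classical
  obtain ⟨I, r, hr, hI⟩ := exists_finset_forall_abs_sub_lt_mem hV hfV
  obtain ⟨M, hM, hIM⟩ := I.finite_toSet.isBounded.exists_pos_norm_le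
  refine ⟨(I ∪ -I).image (M⁻¹ • ·), ?_, r / (2 * M), by positivity, fun g hg => hI g fun x hx => ?_⟩
  · simp only [Finset.mem_image, Finset.mem_union, Finset.mem_neg, forall_exists_index, and_imp]
    rintro _ u hu rfl
    rw [norm_smul, Real.norm_of_nonneg (inv_nonneg.2 hM.le), inv_mul_le_one₀ hM]
    rcases hu with hu | ⟨u, hu, rfl⟩
    · exact hIM u hu
    · simpa using hIM u hu
  · have h₁ := hg (M⁻¹ • x) (Finset.mem_image_of_mem _ (Finset.mem_union_left _ hx))
    have h₂ := hg (M⁻¹ • -x)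
      (Finset.mem_image_of_mem _ (Finset.mem_union_right _ (Finset.neg_mem_neg hx)))
    simp only [map_smul, map_neg, smul_eq_mul] at h₁ h₂
    -- testing at `± M⁻¹ • x` gives `|g x - f x| ≤ a * M = r / 2`
    rw [abs_sub_lt_iff]
    constructor <;>
      nlinarith [mul_inv_cancel₀ hM.ne', div_mul_cancel₀ r (by positivity : 2 * M ≠ 0)]

end WeakStar

section SlopeGap

variable {δ : ℝ}

variable (X δ) in
def HasSlopeGap : Prop :=
  ∀ n : ℕ, 0 < n → ∀ x : Fin n → X, (∀ i, ‖x i‖ = 1) →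
    ∀ f : StrongDual ℝ X, ‖f‖ ≤ 1 →
      ∀ ε > (0 : ℝ), ∀ t₀ > (0 : ℝ), ∃ y : X, ‖y‖ = 1 ∧
        δ - ε < sInf (rightSlopes x f t₀ y) - sSup (leftSlopes x f t₀ y)

theorem hasSlopeGap_of_weaklyAverageRough (h : WeaklyAverageRough X δ) : HasSlopeGap X δ := by
  intro n hn x hx f hf ε hε t₀ ht₀
  have : Nonempty (Fin n) := ⟨⟨0, hn⟩⟩
  have : Nontrivial X := nontrivial_of_ne (x ⟨0, hn⟩) 0 (norm_ne_zero_iff.1 (by simp [hx]))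
  set γ := ε * t₀ / 4
  have hγ : γ / t₀ = ε / 4 := by simp only [γ]; field_simp
  set V : Set (WeakDual ℝ X) := ⋂ i, {g | f (x i) - γ < g (x i)}
  have hV : IsOpen V :=
    isOpen_iInter_of_finite fun i => isOpen_lt continuous_const (WeakDual.eval_continuous _)
  set U := {g : StrongDual ℝ X | ‖g‖ ≤ 1} ∩ {g | StrongDual.toWeakDual g ∈ V}
  have hfU : f ∈ U := ⟨hf, mem_iInter.2 fun i => sub_lt_self (f (x i)) (by positivity)⟩
  obtain ⟨g, ⟨hg, hgV⟩, g', ⟨hg', hg'V⟩, hgg'⟩ :=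
    exists_lt_dist_of_lt_diam ⟨f, hfU⟩ ((sub_lt_self δ (by positivity : 0 < ε / 2)).trans_le
      (h V hV U rfl ⟨f, hfU⟩))
  rw [dist_eq_norm] at hgg'
  obtain ⟨y, hy, hgy⟩ := (g - g').exists_norm_eq_one_lt_apply hgg'
  refine ⟨y, hy, ?_⟩
  have h₁ := apply_sub_div_le_sInf_rightSlopes (y := y) hg
    (fun i => (mem_iInter.1 hgV i).le) (by positivity) ht₀
  have h₂ := sSup_leftSlopes_le_apply_add_div (y := y) hg'
    (fun i => (mem_iInter.1 hg'V i).le) (by positivity) ht₀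
  rw [sub_apply] at hgy
  linarith

theorem le_diam_setOf_forall_sub_le_apply [Nontrivial X] (h : HasSlopeGap X δ) {ι : Type*}
    [Fintype ι] {v : ι → X} (hv : ∀ j, ‖v j‖ ≤ 1) {f : StrongDual ℝ X} (hf : ‖f‖ ≤ 1) {a : ℝ}
    (ha : 0 < a) :
    δ ≤ diam {g : StrongDual ℝ X | ‖g‖ ≤ 1 ∧ ∀ j, f (v j) - a ≤ g (v j)} := by
  refine le_of_forall_sub_le fun ε hε => ?_
  have hb : ∀ j, f (v j) - a ≤ f (v j) := fun j => sub_le_self _ ha.le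
  obtain ⟨n, hn, G, hG, hnet⟩ :=
    exists_fin_unit_net_convexHull v (by positivity : 0 < ε / 4 * a / 4)
  have : Nonempty (Fin n) := ⟨⟨0, hn⟩⟩
  obtain ⟨y, hy, hgap⟩ := h n hn G hG f hf (ε / 2) (half_pos hε) (a / 2) (half_pos ha)
  obtain ⟨g, hg, hgv, hgy⟩ := exists_dual_forall_le_apply_eq_halfspaceSupport hf hb y
  obtain ⟨g', hg', hg'v, hg'y⟩ := exists_dual_forall_le_apply_eq_halfspaceSupport hf hb (-y)
  have hG1 : ∀ i, ‖G i‖ ≤ 1 := fun i => (hG i).le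
  have h₁ := sInf_rightSlopes_sub_le_halfspaceSupport hv hf ha (by positivity) hG1 hnet hy
  have h₂ := sInf_rightSlopes_sub_le_halfspaceSupport hv hf ha (by positivity) hG1 hnet
    ((norm_neg y).trans hy)
  rw [← neg_neg (sInf _), ← sSup_leftSlopes, ← hg'y, map_neg] at h₂
  rw [← hgy] at h₁
  have hbdd : Bornology.IsBounded {g : StrongDual ℝ X | ‖g‖ ≤ 1 ∧ ∀ j, f (v j) - a ≤ g (v j)} :=
    isBounded_closedBall.subset fun g hg => mem_closedBall_zero_iff.2 hg.1
  calc δ - ε ≤ (g - g') y := by rw [sub_apply]; linarith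
    _ ≤ ‖g - g'‖ := by simpa [hy] using (le_abs_self _).trans ((g - g').le_opNorm y)
    _ ≤ _ := dist_eq_norm g g' ▸ dist_le_diam_of_mem hbdd ⟨hg, hgv⟩ ⟨hg', hg'v⟩

theorem weaklyAverageRough_of_hasSlopeGap [Nontrivial X] (h : HasSlopeGap X δ) :
    WeaklyAverageRough X δ := by
  rintro V hV U rfl ⟨f, hf, hfV⟩
  obtain ⟨J, hJ, a, ha, hJV⟩ := exists_finset_forall_sub_le_mem hV hfV
  refine (le_diam_setOf_forall_sub_le_apply h (v := ((↑) : J → X)) (fun u => hJ u u.2) hf ha).trans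
    (diam_mono (fun g hg => ⟨hg.1, hJV g fun u hu => hg.2 ⟨u, hu⟩⟩) ?_)
  exact isBounded_closedBall.subset fun g hg => mem_closedBall_zero_iff.2 hg.1

end SlopeGap

end

theorem weaklyAverageRough_iff_inf_sub_sup
    (X : Type*) [NormedAddCommGroup X] [NormedSpace ℝ X] [Nontrivial X]
    (δ : ℝ) :
    WeaklyAverageRough X δ ↔
      ∀ n : ℕ, 0 < n → ∀ x : Fin n → X, (∀ i, ‖x i‖ = 1) →
        ∀ f : StrongDual ℝ X, ‖f‖ ≤ 1 →
          ∀ ε > (0 : ℝ), ∀ t₀ > (0 : ℝ), ∃ y : X, ‖y‖ = 1 ∧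
            δ - ε <
              sInf {r : ℝ | ∃ i : Fin n, ∃ t : ℝ, t₀ ≤ t ∧
                      r = (‖x i + t • y‖ - f (x i)) / t} -
                sSup {r : ℝ | ∃ i : Fin n, ∃ t : ℝ, t₀ ≤ t ∧
                      r = (‖x i - t • y‖ - f (x i)) / (-t)} :=
  ⟨hasSlopeGap_of_weaklyAverageRough, weaklyAverageRough_of_hasSlopeGap⟩
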